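/- arXiv:1601.07307 — 5 statements merged into one kernel-verified Lean document; each statement's English description precedes it below -/
import Mathlib

section
/- If M is a countably infinite graph that is ≥k-homogeneous for some k (i.e., every isomorphism between finite induced subgraphs of size at least k extends to an automorphism of M) and M is not 1-homogeneous, and the countable complete graph K_∞ embeds into M, then M has exactly two orbits of vertices under Aut(M), and one of them is finite. -/
open SimpleGraph

/-- `M` is `n`-homogeneous: every isomorphism between induced subgraphs on
finite vertex sets of size `n` extends to an automorphism of `M`. -/
def IsNHom {V : Type*} (M : SimpleGraph V) (n : ℕ) : Prop :=
  ∀ (s t : Set V), s.Finite → t.Finite → s.ncard = n → t.ncard = n →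
    ∀ f : M.induce s ≃g M.induce t, ∃ g : M ≃g M, ∀ x : s, g x.val = (f x).val

/-- `M` is `≥k`-homogeneous: `n`-homogeneous for all `n ≥ k`. -/
def GeqHom {V : Type*} (M : SimpleGraph V) (k : ℕ) : Prop :=
  ∀ n, k ≤ n → IsNHom M n

/-- `M` is homogeneous: `n`-homogeneous for all `n`. -/
def IsHomogeneous {V : Type*} (M : SimpleGraph V) : Prop :=
  ∀ n, IsNHom M n

/-- The countably infinite complete graph embeds into `M` as an induced subgraph. -/
def HasKInf {V : Type*} (M : SimpleGraph V) : Prop :=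
  Nonempty ((⊤ : SimpleGraph ℕ) ↪g M)

/-- `a` and `b` lie in the same orbit of vertices under `Aut(M)`. -/
def SameOrbit {V : Type*} (M : SimpleGraph V) (a b : V) : Prop :=
  ∃ g : M ≃g M, g a = b

/-- `s` is an orbit of vertices under `Aut(M)`. -/
def IsOrbit {V : Type*} (M : SimpleGraph V) (s : Set V) : Prop :=
  ∃ a, s = {b | SameOrbit M a b}

/-- The ordered pairs `(a,b)` and `(c,d)` lie in the same orbit under `Aut(M)`. -/
def SamePairOrbit {V : Type*} (M : SimpleGraph V) (a b c d : V) : Prop :=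
  ∃ g : M ≃g M, g a = c ∧ g b = d

/-- `a` and `b` lie in a common induced copy of `K_∞`. -/
def InCommonKInf {V : Type*} (M : SimpleGraph V) (a b : V) : Prop :=
  ∃ f : (⊤ : SimpleGraph ℕ) ↪g M, a ∈ Set.range f ∧ b ∈ Set.range f

/-- The 2-orbit `q₁`: adjacent pairs lying in a common induced `K_∞`. -/
def Q1Rel {V : Type*} (M : SimpleGraph V) (a b : V) : Prop :=
  M.Adj a b ∧ InCommonKInf M a b

/-- The 2-orbit `q₂`: adjacent pairs not lying in a common induced `K_∞`. -/
def Q2Rel {V : Type*} (M : SimpleGraph V) (a b : V) : Prop :=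
  M.Adj a b ∧ ¬ InCommonKInf M a b

/-- The 2-orbit `p₁`: non-adjacent pairs `(a,b)` such that `b` is adjacent to at
most `k-1` vertices of any induced `K_∞` containing `a`. -/
def P1Rel {V : Type*} (M : SimpleGraph V) (k : ℕ) (a b : V) : Prop :=
  a ≠ b ∧ ¬ M.Adj a b ∧
    ∀ f : (⊤ : SimpleGraph ℕ) ↪g M, a ∈ Set.range f →
      {c | c ∈ Set.range f ∧ M.Adj b c}.Finite ∧
      {c | c ∈ Set.range f ∧ M.Adj b c}.ncard ≤ k - 1

/-- The 2-orbit `p₂`: the remaining non-adjacent pairs of distinct vertices. -/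
def P2Rel {V : Type*} (M : SimpleGraph V) (k : ℕ) (a b : V) : Prop :=
  a ≠ b ∧ ¬ M.Adj a b ∧ ¬ P1Rel M k a b

/-- The graph `G_t` on `ℤ × {1,…,t}`, with `(a,i)` adjacent to `(b,j)` iff `a ≠ b`. -/
def Gt (t : ℕ) : SimpleGraph (ℤ × Fin t) where
  Adj x y := x.1 ≠ y.1
  symm := ⟨fun _ _ h => Ne.symm h⟩
  loopless := ⟨fun _ h => h rfl⟩

/-- The graph `H_{t,2}`: two copies of `G_t`, with `(a,i)` in the first copy
adjacent to `(b,j)` in the second copy iff `a = b`. -/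
def Ht2 (t : ℕ) : SimpleGraph ((ℤ × Fin t) ⊕ (ℤ × Fin t)) where
  Adj x y := match x, y with
    | .inl a, .inl b => a.1 ≠ b.1
    | .inr a, .inr b => a.1 ≠ b.1
    | .inl a, .inr b => a.1 = b.1
    | .inr a, .inl b => a.1 = b.1
  symm := by
    refine ⟨?_⟩
    rintro (a | a) (b | b) h <;> simp_all <;> omega
  loopless := by
    refine ⟨?_⟩
    rintro (a | a) h <;> exact h rfl

/-- The graph `H_{1,2}`: two disjoint copies of `K_∞` joined by a perfect matching. -/
def H12 : SimpleGraph (ℤ × Fin 2) where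
  Adj x y := (x.2 = y.2 ∧ x.1 ≠ y.1) ∨ (x.1 = y.1 ∧ x.2 ≠ y.2)
  symm := by
    refine ⟨?_⟩
    rintro x y (⟨h1, h2⟩ | ⟨h1, h2⟩)
    · exact Or.inl ⟨h1.symm, h2.symm⟩
    · exact Or.inr ⟨h1.symm, h2.symm⟩
  loopless := by
    refine ⟨?_⟩
    rintro x (⟨_, h⟩ | ⟨_, h⟩) <;> exact h rfl


/-!
Let `n = k + 1`, let `W` be an induced copy of `K_∞`, and let `P` be the set of vertices lying
in some `n`-clique; `W ⊆ P`. Any bijection between two `n`-cliques is an isomorphism, so by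
`n`-homogeneity `P` is an orbit. A vertex `a ∉ P` has only finitely many neighbours in `W`, so
with `n - 1` of its non-neighbours in `W` it spans an isolated vertex plus a clique; hence the
complement of `P` is an orbit too, and it is nonempty because `M` is not vertex-transitive.
If it were infinite, Ramsey's theorem would give an independent `n`-set `I` outside `P`.
Replacing one vertex `q` of `I` by a vertex of `W` with no neighbour in `I` gives another
independent `n`-set, and an automorphism extending this replacement maps `q` into `P`.
-/

section Orbits

variable {V : Type*} {M : SimpleGraph V} {n : ℕ}

def nCliqueVerts (M : SimpleGraph V) (n : ℕ) : Set V :=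
  {v | ∃ s : Finset V, M.IsNClique n s ∧ v ∈ s}

theorem Finset.exists_equiv_apply_eq {α : Type*} {s t : Finset α} (h : s.card = t.card)
    {a b : α} (ha : a ∈ s) (hb : b ∈ t) : ∃ e : s ≃ t, e ⟨a, ha⟩ = ⟨b, hb⟩ := by
  classical
  let e₀ : s ≃ t := Fintype.equivOfCardEq (by simpa using h)
  exact ⟨e₀.trans (Equiv.swap (e₀ ⟨a, ha⟩) ⟨b, hb⟩), Equiv.swap_apply_left _ _⟩

/-- Adjacency on `s` and on `t` is determined in the same way by which endpoints are the marked
points, so any bijection `s ≃ t` sending `a` to `b` is an isomorphism of induced subgraphs. -/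
theorem IsNHom.sameOrbit_of_adj_iff (hM : IsNHom M n) {s t : Finset V}
    (hs : s.card = n) (ht : t.card = n) {a b : V} (ha : a ∈ s) (hb : b ∈ t)
    (R : Prop → Prop → Prop)
    (hRs : ∀ x ∈ s, ∀ y ∈ s, (M.Adj x y ↔ x ≠ y ∧ R (x = a) (y = a)))
    (hRt : ∀ x ∈ t, ∀ y ∈ t, (M.Adj x y ↔ x ≠ y ∧ R (x = b) (y = b))) :
    SameOrbit M a b := by
  obtain ⟨e, hab⟩ := Finset.exists_equiv_apply_eq (hs.trans ht.symm) ha hb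
  have he_eq_b (x : s) : (e x : V) = b ↔ (x : V) = a := by
    change (e x : V) = ((⟨b, hb⟩ : t) : V) ↔ _
    rw [← Subtype.ext_iff, ← hab, e.apply_eq_iff_eq, Subtype.ext_iff]
  let f : M.induce (s : Set V) ≃g M.induce (t : Set V) :=
    { toEquiv := e
      map_rel_iff' := fun {x y} => by
        simp only [comap_adj, Function.Embedding.coe_subtype]
        rw [hRt _ (e x).2 _ (e y).2, hRs _ x.2 _ y.2, he_eq_b, he_eq_b, Ne, Ne,
          ← Subtype.ext_iff, ← Subtype.ext_iff, e.apply_eq_iff_eq] }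
  obtain ⟨g, hg⟩ :=
    hM s t s.finite_toSet t.finite_toSet (by simpa using hs) (by simpa using ht) f
  exact ⟨g, (hg ⟨a, ha⟩).trans (congrArg Subtype.val hab)⟩

theorem SameOrbit.mem_nCliqueVerts_iff {a b : V} (h : SameOrbit M a b) :
    a ∈ nCliqueVerts M n ↔ b ∈ nCliqueVerts M n := by
  classical
  obtain ⟨g, rfl⟩ := h
  have transport (g : M ≃g M) (v : V) (hv : v ∈ nCliqueVerts M n) :
      g v ∈ nCliqueVerts M n := by
    obtain ⟨s, hs, hvs⟩ := hv
    refine ⟨s.map g.toEquiv.toEmbedding, ⟨?_, by rw [Finset.card_map, hs.card_eq]⟩,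
      Finset.mem_map_of_mem _ hvs⟩
    rw [Finset.coe_map]
    rintro _ ⟨x, hx, rfl⟩ _ ⟨y, hy, rfl⟩ hne
    exact g.map_adj_iff.mpr (hs.isClique hx hy (ne_of_apply_ne _ hne))
  exact ⟨transport g a, fun h => by simpa using transport g.symm _ h⟩

theorem isOrbit_of_sameOrbit_iff {S : Set V} {a : V} (h : ∀ b, SameOrbit M a b ↔ b ∈ S) :
    IsOrbit M S :=
  ⟨a, Set.ext fun b => (h b).symm⟩

theorem isNHom_one_of_forall_sameOrbit (h : ∀ a b, SameOrbit M a b) : IsNHom M 1 := by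
  intro s t _ _ hs ht f
  obtain ⟨a, rfl⟩ := Set.ncard_eq_one.mp hs
  obtain ⟨b, rfl⟩ := Set.ncard_eq_one.mp ht
  obtain ⟨g, hg⟩ := h a b
  refine ⟨g, fun x => ?_⟩
  rw [Subsingleton.elim x ⟨a, rfl⟩, hg]
  exact (f ⟨a, rfl⟩).2.symm

theorem IsNHom.sameOrbit_of_mem_nCliqueVerts (hM : IsNHom M n) {a b : V}
    (ha : a ∈ nCliqueVerts M n) (hb : b ∈ nCliqueVerts M n) : SameOrbit M a b := by
  obtain ⟨s, hs, has⟩ := ha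
  obtain ⟨t, ht, hbt⟩ := hb
  have adj_iff {u : Finset V} (hu : M.IsNClique n u) :
      ∀ x ∈ u, ∀ y ∈ u, (M.Adj x y ↔ x ≠ y ∧ True) :=
    fun x hx y hy => ⟨fun h => ⟨h.ne, trivial⟩, fun h => hu.isClique hx hy h.1⟩
  exact hM.sameOrbit_of_adj_iff hs.card_eq ht.card_eq has hbt (fun _ _ => True)
    (adj_iff hs) (adj_iff ht)

theorem IsNHom.isOrbit_nCliqueVerts (hM : IsNHom M n) {a : V}
    (ha : a ∈ nCliqueVerts M n) : IsOrbit M (nCliqueVerts M n) :=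
  isOrbit_of_sameOrbit_iff (a := a) fun _ =>
    ⟨fun h => h.mem_nCliqueVerts_iff.mp ha, hM.sameOrbit_of_mem_nCliqueVerts ha⟩

end Orbits

theorem SimpleGraph.exists_isNIndepSet_of_cliqueFreeOn {V : Type*} {M : SimpleGraph V}
    {S : Set V} (hSinf : S.Infinite) {n : ℕ} (hS : M.CliqueFreeOn S n) (m : ℕ) :
    ∃ I : Finset V, ↑I ⊆ S ∧ M.IsNIndepSet m I := by
  classical
  induction n generalizing S m with
  | zero => exact (hS (by simp) (isNClique_empty.mpr rfl)).elim
  | succ n ih =>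
    induction m generalizing S with
    | zero => exact ⟨∅, by simp, by simp [isNIndepSet_iff]⟩
    | succ m ihm =>
      obtain ⟨v, hv⟩ := hSinf.nonempty
      have hcover : S \ {v} ⊆ (S ∩ M.neighborSet v) ∪ (S \ insert v (M.neighborSet v)) := by
        rintro w ⟨hw, hwv⟩
        by_cases hvw : M.Adj v w
        · exact Or.inl ⟨hw, hvw⟩
        · exact Or.inr ⟨hw, by simp_all⟩
      rcases Set.infinite_union.mp ((hSinf.sdiff (Set.finite_singleton v)).mono hcover)
        with hA | hB
      · obtain ⟨I, hIA, hI⟩ := ih hA (CliqueFreeOn.of_succ M hS hv) (m + 1)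
        exact ⟨I, hIA.trans Set.inter_subset_left, hI⟩
      · obtain ⟨I, hIB, hI⟩ := ihm hB (CliqueFreeOn.subset M Set.sdiff_subset hS)
        refine ⟨insert v I, ?_, (isNClique_compl M).mp (((isNClique_compl M).mpr hI).insert ?_)⟩
        · rw [Finset.coe_insert]
          exact Set.insert_subset hv (hIB.trans Set.sdiff_subset)
        · intro b hb
          have hb' := (hIB hb).2
          simp only [Set.mem_insert_iff, mem_neighborSet, not_or] at hb'
          exact (compl_adj M v b).mpr ⟨Ne.symm hb'.1, hb'.2⟩

section InfiniteClique

variable {V : Type*} {M : SimpleGraph V} {W : Set V} {n : ℕ}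

theorem subset_nCliqueVerts_of_isClique (hW : M.IsClique W) (hWinf : W.Infinite) :
    W ⊆ nCliqueVerts M (n + 1) := by
  classical
  intro w hw
  obtain ⟨C, hC, hCcard⟩ := (hWinf.sdiff (Set.finite_singleton w)).exists_subset_card_eq n
  have hwC : w ∉ C := fun h => (hC h).2 rfl
  refine ⟨insert w C, ⟨hW.subset ?_, by rw [Finset.card_insert_of_notMem hwC, hCcard]⟩,
    Finset.mem_insert_self _ _⟩
  rw [Finset.coe_insert]
  exact Set.insert_subset hw fun x hx => (hC hx).1

theorem finite_adj_of_notMem_nCliqueVerts (hW : M.IsClique W) {v : V}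
    (hv : v ∉ nCliqueVerts M (n + 1)) : {w ∈ W | M.Adj v w}.Finite := by
  classical
  by_contra hinf
  obtain ⟨C, hC, hCcard⟩ := Set.Infinite.exists_subset_card_eq hinf n
  exact hv ⟨insert v C, IsNClique.insert ⟨hW.subset fun x hx => (hC hx).1, hCcard⟩
    fun x hx => (hC hx).2, Finset.mem_insert_self _ _⟩

theorem exists_not_adj_of_subset_compl_nCliqueVerts (hW : M.IsClique W) (hWinf : W.Infinite)
    {I : Finset V} (hI : ↑I ⊆ (nCliqueVerts M (n + 1))ᶜ) :
    ∃ c ∈ W, c ∉ I ∧ ∀ v ∈ I, ¬ M.Adj v c := by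
  have hN : (⋃ v ∈ I, {w ∈ W | M.Adj v w}).Finite :=
    I.finite_toSet.biUnion fun v hv => finite_adj_of_notMem_nCliqueVerts hW (hI hv)
  obtain ⟨c, ⟨hcW, hcN⟩, hcI⟩ := ((hWinf.sdiff hN).sdiff I.finite_toSet).nonempty
  exact ⟨c, hcW, hcI, fun v hv hvc => hcN (Set.mem_biUnion hv ⟨hcW, hvc⟩)⟩

theorem exists_isolated_add_clique_of_notMem_nCliqueVerts (hW : M.IsClique W)
    (hWinf : W.Infinite) {a : V} (ha : a ∉ nCliqueVerts M (n + 1)) :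
    ∃ s : Finset V, s.card = n + 1 ∧ a ∈ s ∧
      ∀ x ∈ s, ∀ y ∈ s, (M.Adj x y ↔ x ≠ y ∧ ¬x = a ∧ ¬y = a) := by
  classical
  obtain ⟨C, hC, hCcard⟩ := (((hWinf.sdiff (finite_adj_of_notMem_nCliqueVerts hW ha)).sdiff
    (Set.finite_singleton a))).exists_subset_card_eq n
  have hCW (x) (hx : x ∈ C) : x ∈ W := (hC hx).1.1
  have hCa (x) (hx : x ∈ C) : ¬ M.Adj a x := fun h => (hC hx).1.2 ⟨hCW x hx, h⟩
  have hCne (x) (hx : x ∈ C) : x ≠ a := (hC hx).2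
  refine ⟨insert a C, by rw [Finset.card_insert_of_notMem fun h => hCne a h rfl, hCcard],
    Finset.mem_insert_self _ _, fun x hx y hy => ?_⟩
  rcases Finset.mem_insert.mp hx with rfl | hxC <;> rcases Finset.mem_insert.mp hy with rfl | hyC
  · simp
  · simp [hCa y hyC]
  · simpa using fun h : M.Adj x y => hCa x hxC h.symm
  · exact ⟨fun h => ⟨h.ne, hCne x hxC, hCne y hyC⟩,
      fun h => hW (hCW x hxC) (hCW y hyC) h.1⟩

theorem IsNHom.isOrbit_compl_nCliqueVerts (hM : IsNHom M (n + 1)) (hW : M.IsClique W)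
    (hWinf : W.Infinite) {a : V} (ha : a ∉ nCliqueVerts M (n + 1)) :
    IsOrbit M (nCliqueVerts M (n + 1))ᶜ := by
  obtain ⟨s, hs, has, hadj_s⟩ := exists_isolated_add_clique_of_notMem_nCliqueVerts hW hWinf ha
  refine isOrbit_of_sameOrbit_iff (a := a) fun b =>
    ⟨fun h hb => ha (h.mem_nCliqueVerts_iff.mpr hb), fun hb => ?_⟩
  obtain ⟨t, ht, hbt, hadj_t⟩ := exists_isolated_add_clique_of_notMem_nCliqueVerts hW hWinf hb
  exact hM.sameOrbit_of_adj_iff hs ht has hbt (fun p q => ¬p ∧ ¬q) hadj_s hadj_t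

theorem IsNHom.finite_compl_nCliqueVerts (hM : IsNHom M (n + 1)) (hW : M.IsClique W)
    (hWinf : W.Infinite) : (nCliqueVerts M (n + 1))ᶜ.Finite := by
  classical
  by_contra hinf
  have hfree : M.CliqueFreeOn (nCliqueVerts M (n + 1))ᶜ (n + 1) := fun t ht hcl => by
    obtain ⟨v, hv⟩ := Finset.card_pos.mp (hcl.card_eq ▸ n.succ_pos : 0 < t.card)
    exact ht hv ⟨t, hcl, hv⟩
  obtain ⟨I, hIP, hI⟩ := exists_isNIndepSet_of_cliqueFreeOn hinf hfree (n + 1)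
  obtain ⟨q, hq⟩ := Finset.card_pos.mp (hI.card_eq ▸ n.succ_pos : 0 < I.card)
  obtain ⟨c, hcW, hcI, hc⟩ := exists_not_adj_of_subset_compl_nCliqueVerts hW hWinf hIP
  have hI' : Mᶜ.IsNClique (n + 1) I := (isNClique_compl M).mpr hI
  have hJ : Mᶜ.IsNClique (n + 1) (insert c (I.erase q)) := by
    refine hI'.insert_erase (fun w hw => ?_) hq
    obtain ⟨hwI, -⟩ := Finset.mem_sdiff.mp hw
    exact (compl_adj M c w).mpr ⟨fun h => hcI (h ▸ hwI), fun h => hc w hwI h.symm⟩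
  have adj_iff {u : Finset V} (hu : Mᶜ.IsNClique (n + 1) u) :
      ∀ x ∈ u, ∀ y ∈ u, (M.Adj x y ↔ x ≠ y ∧ False) :=
    fun x hx y hy => iff_of_false (fun h => ((compl_adj M x y).mp (hu.isClique hx hy h.ne)).2 h)
      fun h => h.2
  have hqc : SameOrbit M q c := hM.sameOrbit_of_adj_iff hI.card_eq hJ.card_eq hq
    (Finset.mem_insert_self _ _) (fun _ _ => False) (adj_iff hI') (adj_iff hJ)
  exact hIP hq (hqc.mem_nCliqueVerts_iff.mpr (subset_nCliqueVerts_of_isClique hW hWinf hcW))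

end InfiniteClique

theorem stmt0_general {V : Type} (M : SimpleGraph V) (k : ℕ)
    (hM : GeqHom M k) (h1 : ¬ IsNHom M 1) (hK : HasKInf M) :
    ∃ p q : Set V, IsOrbit M p ∧ IsOrbit M q ∧ p ≠ q ∧ p ∪ q = Set.univ ∧
      (p.Finite ∨ q.Finite) := by
  obtain ⟨f⟩ := hK
  have hW : M.IsClique (Set.range f) := isClique_range_copy_top f.toCopy
  have hWinf : (Set.range f).Infinite := Set.infinite_range_of_injective f.injective
  have hhom : IsNHom M (k + 1) := hM (k + 1) k.le_succ
  set P := nCliqueVerts M (k + 1)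
  have haP : f 0 ∈ P := subset_nCliqueVerts_of_isClique hW hWinf (Set.mem_range_self 0)
  obtain ⟨b, hbP⟩ : Pᶜ.Nonempty := by
    refine Set.nonempty_compl.mpr fun hP => h1 (isNHom_one_of_forall_sameOrbit fun x y => ?_)
    exact hhom.sameOrbit_of_mem_nCliqueVerts (Set.eq_univ_iff_forall.mp hP x)
      (Set.eq_univ_iff_forall.mp hP y)
  refine ⟨P, Pᶜ, hhom.isOrbit_nCliqueVerts haP, hhom.isOrbit_compl_nCliqueVerts hW hWinf hbP,
    fun h => ?_, Set.union_compl_self P, Or.inr (hhom.finite_compl_nCliqueVerts hW hWinf)⟩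
  exact (h ▸ haP : f 0 ∈ Pᶜ) haP

theorem stmt0 {V : Type} [Countable V] [Infinite V] (M : SimpleGraph V) (k : ℕ)
    (hM : GeqHom M k) (h1 : ¬ IsNHom M 1) (hK : HasKInf M) :
    ∃ p q : Set V, IsOrbit M p ∧ IsOrbit M q ∧ p ≠ q ∧ p ∪ q = Set.univ ∧
      (p.Finite ∨ q.Finite) :=
  stmt0_general M k hM h1 hK
end

section
/- Let M be a countably infinite graph that is ≥k-homogeneous but not 1-homogeneous, with K_∞ embeddable in M. Let p be the infinite vertex orbit and q the finite vertex orbit. Then no vertex of p is adjacent to any vertex of q. -/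
open SimpleGraph

/-! Every induced `K_∞` lies in a single orbit: any two of its vertices sit in a `(k+2)`-clique,
and `≥k`-homogeneity extends the transposition of the two to an automorphism. Hence no vertex of a
finite orbit lies on an induced `K_∞`, and in particular `K_∞ ⊆ p`. If `a ∈ p` had a neighbour
`b ∈ q`, moving `a` onto each vertex of a copy of `K_∞` would give every vertex of that copy a
neighbour in `q`; as `q` is finite, one `y ∈ q` is adjacent to infinitely many of them, so `y` lies
on an induced `K_∞` itself, which is impossible. -/

namespace IsOrbit

variable {V : Type*} {M : SimpleGraph V} {s : Set V} {u v : V}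

lemma sameOrbit (hs : IsOrbit M s) (hu : u ∈ s) (hv : v ∈ s) : SameOrbit M u v := by
  obtain ⟨a, rfl⟩ := hs
  obtain ⟨g, rfl⟩ := hu
  obtain ⟨h, rfl⟩ := hv
  exact ⟨g.symm.trans h, by simp⟩

lemma apply_mem (hs : IsOrbit M s) (hv : v ∈ s) (g : M ≃g M) : g v ∈ s := by
  obtain ⟨a, rfl⟩ := hs
  obtain ⟨h, rfl⟩ := hv
  exact ⟨h.trans g, rfl⟩

lemma subset_of_sameOrbit {S : Set V} (hs : IsOrbit M s) (hv : v ∈ s)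
    (hS : ∀ w ∈ S, SameOrbit M v w) : S ⊆ s := fun w hw ↦ by
  obtain ⟨g, rfl⟩ := hS w hw
  exact hs.apply_mem hv g

end IsOrbit

section Clique

variable {V : Type*} {M : SimpleGraph V} {s : Set V} {u v : V}

lemma IsNHom.sameOrbit_of_isClique (hM : IsNHom M s.ncard) (hs : s.Finite)
    (hc : M.IsClique s) (hu : u ∈ s) (hv : v ∈ s) : SameOrbit M u v := by
  classical
  have adj_iff : ∀ x y : s, (M.induce s).Adj x y ↔ x ≠ y := fun x y ↦
    ⟨fun h ↦ (M.induce s).ne_of_adj h,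
      fun h ↦ hc x.2 y.2 (Subtype.coe_injective.ne h)⟩
  let σ : M.induce s ≃g M.induce s :=
    { toEquiv := Equiv.swap ⟨u, hu⟩ ⟨v, hv⟩
      map_rel_iff' := by
        intro x y
        rw [adj_iff, adj_iff, not_iff_not]
        exact (Equiv.swap _ _).apply_eq_iff_eq }
  obtain ⟨g, hg⟩ := hM s s hs hs rfl rfl σ
  exact ⟨g, (hg ⟨u, hu⟩).trans (congrArg Subtype.val (Equiv.swap_apply_left (α := s) _ _))⟩

lemma GeqHom.sameOrbit_of_isClique {k : ℕ} (hM : GeqHom M k) (hc : M.IsClique s)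
    (hs : s.Infinite) (hu : u ∈ s) (hv : v ∈ s) : SameOrbit M u v := by
  have huv : ({u, v} : Set V).ncard ≤ k + 2 :=
    (Set.ncard_insert_le u {v}).trans (by simp)
  obtain ⟨t, hut, hts, ht⟩ :=
    hs.exists_superset_ncard_eq (Set.pair_subset hu hv) (Set.toFinite _) huv
  have htf : t.Finite := Set.finite_of_ncard_pos (by omega)
  exact (ht ▸ hM (k + 2) (by omega)).sameOrbit_of_isClique htf (hc.subset hts)
    (hut (Set.mem_insert u {v})) (hut (Set.mem_insert_of_mem u rfl))

lemma IsOrbit.infinite_of_mem_isClique {k : ℕ} {S : Set V} (hs : IsOrbit M s)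
    (hM : GeqHom M k) (hc : M.IsClique S) (hS : S.Infinite) (hvS : v ∈ S) (hvs : v ∈ s) :
    s.Infinite :=
  hS.mono (hs.subset_of_sameOrbit hvs fun _ hw ↦ hM.sameOrbit_of_isClique hc hS hvS hw)

end Clique

lemma SimpleGraph.exists_infinite_inter_neighborSet {V : Type*} (M : SimpleGraph V)
    {S q : Set V} (hS : S.Infinite) (hq : q.Finite) (h : ∀ v ∈ S, ∃ y ∈ q, M.Adj v y) :
    ∃ y ∈ q, (S ∩ M.neighborSet y).Infinite := by
  by_contra! hfin
  refine hS ((hq.biUnion hfin).subset fun v hv ↦ ?_)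
  obtain ⟨y, hy, hvy⟩ := h v hv
  exact Set.mem_biUnion hy ⟨hv, hvy.symm⟩

theorem stmt1_general {V : Type} (M : SimpleGraph V) (k : ℕ)
    (hM : GeqHom M k) (hK : HasKInf M)
    (p q : Set V) (hp : IsOrbit M p) (hq : IsOrbit M q)
    (hqf : q.Finite) (hcover : p ∪ q = Set.univ) :
    ∀ a ∈ p, ∀ b ∈ q, ¬ M.Adj a b := by
  intro a ha b hb hab
  obtain ⟨f⟩ := hK
  set S := Set.range f
  have hc : M.IsClique S := isClique_range_copy_top f.toCopy
  have hS : S.Infinite := Set.infinite_range_of_injective f.injective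
  have hSp : S ⊆ p := fun v hv ↦ (hcover.symm ▸ Set.mem_univ v : v ∈ p ∪ q).resolve_right
    fun hvq ↦ hqf.not_infinite (hq.infinite_of_mem_isClique hM hc hS hv hvq)
  have hnbr : ∀ v ∈ S, ∃ y ∈ q, M.Adj v y := fun v hv ↦ by
    obtain ⟨g, rfl⟩ := hp.sameOrbit ha (hSp hv)
    exact ⟨g b, hq.apply_mem hb g, g.map_adj_iff.mpr hab⟩
  obtain ⟨y, hyq, hyS⟩ := M.exists_infinite_inter_neighborSet hS hqf hnbr
  have hcy : M.IsClique (insert y (S ∩ M.neighborSet y)) :=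
    (hc.subset Set.inter_subset_left).insert fun _ hw _ ↦ hw.2
  exact hqf.not_infinite <| hq.infinite_of_mem_isClique hM hcy
    (hyS.mono (Set.subset_insert _ _)) (Set.mem_insert _ _) hyq

theorem stmt1 {V : Type} [Countable V] [Infinite V] (M : SimpleGraph V) (k : ℕ)
    (hM : GeqHom M k) (h1 : ¬ IsNHom M 1) (hK : HasKInf M)
    (p q : Set V) (hp : IsOrbit M p) (hq : IsOrbit M q)
    (hpi : p.Infinite) (hqf : q.Finite) (hcover : p ∪ q = Set.univ) :
    ∀ a ∈ p, ∀ b ∈ q, ¬ M.Adj a b :=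
  stmt1_general M k hM hK p q hp hq hqf hcover
end

section
/- Let M be a countably infinite graph that is ≥k-homogeneous but not 1-homogeneous with K_∞ ⊆ M, and let p be the infinite vertex orbit and q the finite vertex orbit. Then the induced subgraph on q is a homogeneous graph (every isomorphism between induced subgraphs of q extends to an automorphism of q). -/
open SimpleGraph

/-!
Because `M` is not 1-homogeneous, `k ≥ 1`. No vertex of `p` has a neighbour in `q`: otherwise,
by transitivity on `p`, every vertex of `p` has one, so by pigeonhole some `c ∈ q` is adjacent to
infinitely many vertices of a `K_∞` outside `q`. Replacing one vertex of a `k`-clique of them by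
`c` gives an isomorphism of `k`-cliques; an automorphism extending it moves `c` out of its orbit.

Now fix a `k`-set `X ⊆ p`. An isomorphism between finite induced subgraphs of `q`, extended by the
identity on `X`, is an isomorphism between induced subgraphs of size at least `k`, since `X` is
not joined to `q`. It extends to an automorphism of `M`, which preserves the orbit `q` and so
restricts to an automorphism of `M[q]`.
-/

namespace SimpleGraph

variable {V : Type*} {G : SimpleGraph V}

variable (G) in
noncomputable def induceInduceIso (q : Set V) (s : Set q) :
    (G.induce q).induce s ≃g G.induce (Subtype.val '' s) where
  toEquiv := Equiv.Set.image Subtype.val s Subtype.val_injective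
  map_rel_iff' := Iff.rfl

variable (G) in
open Classical in
noncomputable def induceUnionIsoSum {A X : Set V} (hAX : Disjoint A X)
    (hnadj : ∀ a ∈ A, ∀ x ∈ X, ¬ G.Adj a x) :
    G.induce (A ∪ X) ≃g G.induce A ⊕g G.induce X where
  toEquiv := Equiv.Set.union hAX
  map_rel_iff' {u v} := by
    obtain ⟨u, hu | hu⟩ := u <;> obtain ⟨v, hv | hv⟩ := v <;>
      simp only [hu, hv, Equiv.Set.union_apply_left hAX, Equiv.Set.union_apply_right hAX, sum_adj,
        comap_adj, Function.Embedding.subtype_apply, false_iff]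
    · exact hnadj u hu v hv
    · exact fun h ↦ hnadj v hv u hu h.symm

def IsClique.induceIso {s t : Set V} (hs : G.IsClique s) (ht : G.IsClique t) (e : s ≃ t) :
    G.induce s ≃g G.induce t where
  toEquiv := e
  map_rel_iff' {u v} := by
    rw [induce_eq_top.mpr hs, induce_eq_top.mpr ht]
    simp

theorem exists_infinite_adj_of_finite {W Q : Set V} (hW : W.Infinite) (hQ : Q.Finite)
    (h : ∀ w ∈ W, ∃ c ∈ Q, G.Adj w c) : ∃ c ∈ Q, {w ∈ W | G.Adj c w}.Infinite := by
  by_contra! hfin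
  refine hW ((hQ.biUnion hfin).subset fun w hw ↦ ?_)
  obtain ⟨c, hc, hwc⟩ := h w hw
  exact Set.mem_biUnion hc ⟨hw, hwc.symm⟩

end SimpleGraph

namespace IsNHom

variable {V : Type*} {G : SimpleGraph V}

theorem exists_apply_mem_of_isClique {k : ℕ} (hG : IsNHom G k) (hk : 1 ≤ k) {W : Set V}
    (hW : G.IsClique W) (hWinf : W.Infinite) {c : V} (hcW : c ∉ W)
    (hadj : ∀ w ∈ W, G.Adj c w) : ∃ g : G ≃g G, g c ∈ W := by
  obtain ⟨Z, hZW, hZ, hZk⟩ := hWinf.exists_subset_ncard_eq k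
  obtain ⟨y, hy⟩ := Set.nonempty_of_ncard_ne_zero (s := Z) (by omega)
  set S := insert c (Z \ {y})
  have hS : G.IsClique S :=
    (hW.subset (Set.sdiff_subset.trans hZW)).insert fun w hw _ ↦ hadj w (hZW hw.1)
  have hSfin : S.Finite := hZ.sdiff.insert c
  have hSk : S.ncard = k := by
    rw [Set.ncard_insert_of_notMem (fun h ↦ hcW (hZW h.1)) hZ.sdiff,
      Set.ncard_sdiff_singleton_of_mem hy]
    omega
  have := hSfin.to_subtype
  have := hZ.to_subtype
  obtain ⟨e⟩ : Nonempty (S ≃ Z) := Finite.card_eq.mp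
    (by rw [Nat.card_coe_set_eq, Nat.card_coe_set_eq, hSk, hZk])
  obtain ⟨g, hg⟩ := hG S Z hSfin hZ hSk hZk (hS.induceIso (hW.subset hZW) e)
  exact ⟨g, hg ⟨c, Set.mem_insert c _⟩ ▸ hZW (e _).2⟩

theorem exists_extend_of_disjoint_of_not_adj {A B X : Set V} (hG : IsNHom G (A.ncard + X.ncard))
    (hA : A.Finite) (hB : B.Finite) (hX : X.Finite) (hAX : Disjoint A X) (hBX : Disjoint B X)
    (hnA : ∀ a ∈ A, ∀ x ∈ X, ¬ G.Adj a x) (hnB : ∀ b ∈ B, ∀ x ∈ X, ¬ G.Adj b x)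
    (φ : G.induce A ≃g G.induce B) : ∃ g : G ≃g G, ∀ a : A, g a = φ a := by
  classical
  let F := (G.induceUnionIsoSum hAX hnA).trans
    ((φ.sumCongr .refl).trans (G.induceUnionIsoSum hBX hnB).symm)
  obtain ⟨g, hg⟩ := hG _ _ (hA.union hX) (hB.union hX) (Set.ncard_union_eq hAX hA hX)
    (by rw [Set.ncard_union_eq hBX hB hX, Set.ncard_congr' φ.toEquiv]) F
  refine ⟨g, fun a ↦ ?_⟩
  rw [hg ⟨a, Or.inl a.2⟩]
  simp [F, induceUnionIsoSum, Equiv.Set.union_apply_left hAX (a := ⟨a, Or.inl a.2⟩) a.2]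

end IsNHom

theorem isHomogeneous_induce_of_disjoint_of_not_adj {V : Type*} {G : SimpleGraph V} {q X : Set V}
    (hG : ∀ n, IsNHom G (n + X.ncard)) (hq : ∀ g : G ≃g G, Set.BijOn g q q) (hX : X.Finite)
    (hqX : Disjoint q X) (hnadj : ∀ a ∈ q, ∀ x ∈ X, ¬ G.Adj a x) :
    IsHomogeneous (G.induce q) := by
  intro _ s t hs ht _ _ f
  have hsub : ∀ u : Set q, Subtype.val '' u ⊆ q := fun u ↦ Subtype.coe_image_subset q u
  obtain ⟨g, hg⟩ := (hG _).exists_extend_of_disjoint_of_not_adj (hs.image _) (ht.image _) hX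
    (hqX.mono_left (hsub s)) (hqX.mono_left (hsub t))
    (fun a ha ↦ hnadj a (hsub s ha)) (fun a ha ↦ hnadj a (hsub t ha))
    (((G.induceInduceIso q s).symm.trans f).trans (G.induceInduceIso q t))
  refine ⟨g.induce (hq g), fun x ↦ Subtype.ext ?_⟩
  have hx : (G.induceInduceIso q s).symm ⟨x.1.1, x, x.2, rfl⟩ = x :=
    (G.induceInduceIso q s).symm_apply_eq.2 rfl
  rw [Iso.coe_induce, Set.MapsTo.val_restrict_apply, hg ⟨x, x, x.2, rfl⟩, RelIso.trans_apply,
    RelIso.trans_apply, hx]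
  rfl

theorem SameOrbit.symm {V : Type*} {G : SimpleGraph V} {a b : V} :
    SameOrbit G a b → SameOrbit G b a
  | ⟨g, hg⟩ => ⟨g.symm, by rw [← hg, RelIso.symm_apply_apply]⟩

theorem SameOrbit.trans {V : Type*} {G : SimpleGraph V} {a b c : V} :
    SameOrbit G a b → SameOrbit G b c → SameOrbit G a c
  | ⟨g, hg⟩, ⟨h, hh⟩ => ⟨g.trans h, by rw [RelIso.trans_apply, hg, hh]⟩

namespace IsOrbit

variable {V : Type*} {G : SimpleGraph V} {p q : Set V}

theorem sameOrbit_s4 (hq : IsOrbit G q) {a b : V} (ha : a ∈ q) (hb : b ∈ q) : SameOrbit G a b := by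
  obtain ⟨c, rfl⟩ := hq
  exact ha.symm.trans hb

theorem mem_of_sameOrbit (hq : IsOrbit G q) {a b : V} (ha : a ∈ q) (hab : SameOrbit G a b) :
    b ∈ q := by
  obtain ⟨c, rfl⟩ := hq
  exact ha.trans hab

theorem apply_mem_s4 (hq : IsOrbit G q) (g : G ≃g G) {a : V} (ha : a ∈ q) : g a ∈ q :=
  hq.mem_of_sameOrbit ha ⟨g, rfl⟩

theorem bijOn (hq : IsOrbit G q) (g : G ≃g G) : Set.BijOn g q q :=
  g.toEquiv.bijOn' (fun _ ↦ hq.apply_mem_s4 g) (fun _ ↦ hq.apply_mem_s4 g.symm)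

theorem disjoint_of_infinite_of_finite (hp : IsOrbit G p) (hq : IsOrbit G q) (hpi : p.Infinite)
    (hqf : q.Finite) : Disjoint p q :=
  Set.disjoint_left.mpr fun _ hxp hxq ↦
    hpi (hqf.subset fun _ hy ↦ hq.mem_of_sameOrbit hxq (hp.sameOrbit_s4 hxp hy))

theorem not_adj_of_hasKInf {k : ℕ} (hG : IsNHom G k) (hk : 1 ≤ k) (hK : HasKInf G)
    (hp : IsOrbit G p) (hq : IsOrbit G q) (hqf : q.Finite) (hcover : p ∪ q = Set.univ) :
    ∀ x ∈ p, ∀ b ∈ q, ¬ G.Adj x b := by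
  intro x hx b hb hxb
  obtain ⟨F⟩ := hK
  have hnbr : ∀ w ∈ Set.range F \ q, ∃ c ∈ q, G.Adj w c := by
    intro w hw
    obtain ⟨g, rfl⟩ := hp.sameOrbit_s4 hx (((hcover ▸ Set.mem_univ w) : w ∈ p ∪ q).resolve_right hw.2)
    exact ⟨g b, hq.apply_mem_s4 g hb, g.map_adj_iff.mpr hxb⟩
  obtain ⟨c, hc, hinf⟩ :=
    exists_infinite_adj_of_finite ((Set.infinite_range_of_injective F.injective).sdiff hqf) hqf hnbr
  obtain ⟨g, hg⟩ := hG.exists_apply_mem_of_isClique hk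
    ((isClique_range_copy_top F.toCopy).subset fun _ hw ↦ hw.1.1) hinf (fun h ↦ h.1.2 hc)
    fun _ hw ↦ hw.2
  exact hg.1.2 (hq.apply_mem_s4 g hc)

end IsOrbit

theorem stmt4_general {V : Type} (M : SimpleGraph V) (k : ℕ)
    (hM : GeqHom M k) (h1 : ¬ IsNHom M 1) (hK : HasKInf M)
    (p q : Set V) (hp : IsOrbit M p) (hq : IsOrbit M q)
    (hpi : p.Infinite) (hqf : q.Finite) (hcover : p ∪ q = Set.univ) :
    IsHomogeneous (M.induce q) := by
  have hk : 1 ≤ k := by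
    by_contra! hk
    exact h1 (hM 1 (by omega))
  have hnadj := hp.not_adj_of_hasKInf (hM k le_rfl) hk hK hq hqf hcover
  obtain ⟨X, hXp, hX, hXk⟩ := hpi.exists_subset_ncard_eq k
  refine isHomogeneous_induce_of_disjoint_of_not_adj (fun n ↦ ?_) hq.bijOn hX
    ((hp.disjoint_of_infinite_of_finite hq hpi hqf).symm.mono_right hXp)
    fun a ha x hx hax ↦ hnadj x (hXp hx) a ha hax.symm
  rw [hXk]
  exact hM _ (Nat.le_add_left k n)

theorem stmt4 {V : Type} [Countable V] [Infinite V] (M : SimpleGraph V) (k : ℕ)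
    (hM : GeqHom M k) (h1 : ¬ IsNHom M 1) (hK : HasKInf M)
    (p q : Set V) (hp : IsOrbit M p) (hq : IsOrbit M q)
    (hpi : p.Infinite) (hqf : q.Finite) (hcover : p ∪ q = Set.univ) :
    IsHomogeneous (M.induce q) :=
  stmt4_general M k hM h1 hK p q hp hq hpi hqf hcover
end

section
/- For every t ≥ 1 and every finite homogeneous graph H, the disjoint union G_t ⊔ H is ≥k-homogeneous for k = 3·max(|H|, t), i.e., every isomorphism between finite induced subgraphs of size at least k extends to an automorphism. -/
open SimpleGraph

/-!
An isomorphism between induced subgraphs of `G_t ⊔ H` preserves degrees. In an induced subgraph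
on `n ≥ 2|H| + t` vertices, a vertex of `G_t` is adjacent to all but at most `t + |H|` of them,
hence to at least `|H|`, while a vertex of `H` has fewer than `|H|` neighbours. So the
isomorphism maps the `G_t`-part to the `G_t`-part and the `H`-part to the `H`-part. Both `G_t`
and `H` are homogeneous (a partial isomorphism of `G_t` is an injection of columns together with
injections inside each column, and these extend to permutations of `ℤ` and of `Fin t`), so the
two restrictions extend to automorphisms whose sum extends the given isomorphism.
-/

open Cardinal in
theorem Set.Finite.exists_perm_extend {α : Type*} {s : Set α} (hs : s.Finite) (f : s ↪ α) :
    ∃ g : Equiv.Perm α, ∀ x : s, g x = f x := by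
  cases finite_or_infinite α
  · exact extend_function_finite f ⟨Equiv.refl α⟩
  · exact extend_function_of_lt f (hs.lt_aleph0.trans_le (aleph0_le_mk α)) ⟨Equiv.refl α⟩

lemma IsHomogeneous.exists_extend {V : Type*} {M : SimpleGraph V} (hM : IsHomogeneous M)
    {s : Set V} (hs : s.Finite) (φ : M.induce s ↪g M) :
    ∃ g : M ≃g M, ∀ x : s, g x = φ x :=
  have := hs.to_subtype
  hM _ s _ hs (Set.finite_range φ) rfl
    ((Set.ncard_range_of_injective φ.injective).trans (Nat.card_coe_set_eq s))
    φ.isoInduceRange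

lemma SimpleGraph.Iso.exists_embedding_induce_preimage {U V : Type*} {N : SimpleGraph U}
    {M : SimpleGraph V} {s s' : Set V} (f : M.induce s ≃g M.induce s') (e : N ↪g M)
    (hf : ∀ x : s, x.val ∈ Set.range e → (f x).val ∈ Set.range e) :
    ∃ φ : N.induce (e ⁻¹' s) ↪g N, ∀ x, e (φ x) = f ⟨e x, x.2⟩ := by
  choose φ hφ using fun x : e ⁻¹' s => hf ⟨e x, x.2⟩ (Set.mem_range_self _)
  refine ⟨⟨⟨φ, fun x y hxy => ?_⟩, fun {x y} => ?_⟩, hφ⟩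
  · have := f.injective (Subtype.ext ((hφ x).symm.trans ((congrArg e hxy).trans (hφ y))))
    exact Subtype.ext (e.injective (congrArg Subtype.val this))
  · change N.Adj (φ x) (φ y) ↔ N.Adj x y
    rw [← e.map_adj_iff, hφ, hφ, ← e.map_adj_iff]
    exact f.map_adj_iff

lemma IsHomogeneous.exists_sum_extend {V W : Type*} {M : SimpleGraph V} {N : SimpleGraph W}
    (hM : IsHomogeneous M) (hN : IsHomogeneous N) {s s' : Set (V ⊕ W)} (hs : s.Finite)
    (f : (M ⊕g N).induce s ≃g (M ⊕g N).induce s')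
    (hf : ∀ x : s, (f x).val ∈ Set.range Sum.inl ↔ x.val ∈ Set.range Sum.inl) :
    ∃ g : M ⊕g N ≃g M ⊕g N, ∀ x : s, g x = f x := by
  obtain ⟨φ, hφ⟩ := f.exists_embedding_induce_preimage Embedding.sumInl fun x => (hf x).mpr
  obtain ⟨ψ, hψ⟩ := f.exists_embedding_induce_preimage Embedding.sumInr fun x => by
    change x.val ∈ Set.range Sum.inr → (f x).val ∈ Set.range Sum.inr
    rw [← Set.compl_range_inl]
    exact (hf x).not.mpr
  obtain ⟨gM, hgM⟩ := hM.exists_extend (hs.preimage Sum.inl_injective.injOn) φ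
  obtain ⟨gN, hgN⟩ := hN.exists_extend (hs.preimage Sum.inr_injective.injOn) ψ
  refine ⟨Iso.sumCongr gM gN, ?_⟩
  rintro ⟨v | w, hx⟩
  · exact (congrArg Sum.inl (hgM ⟨v, hx⟩)).trans (hφ ⟨v, hx⟩)
  · exact (congrArg Sum.inr (hgN ⟨w, hx⟩)).trans (hψ ⟨w, hx⟩)

lemma card_neighborSet_induce_sum_lt_of_eq_inr {V W : Type*} [Fintype W] (G : SimpleGraph V)
    (H : SimpleGraph W) {s : Set (V ⊕ W)} (x : s) {w : W} (hx : x.val = Sum.inr w) :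
    Nat.card (((G ⊕g H).induce s).neighborSet x) < Fintype.card W := by
  classical
  have : Finite ((G ⊕g H).neighborSet x) := by
    rw [hx, neighborSet_sum_inr]
    exact Set.toFinite _
  calc Nat.card (((G ⊕g H).induce s).neighborSet x)
      ≤ Nat.card ((G ⊕g H).neighborSet x) :=
        Nat.card_le_card_of_injective _ ((Embedding.induce s).mapNeighborSet x).injective
    _ = H.degree w := by
        rw [hx, neighborSet_sum_inr, Nat.card_image_of_injective Sum.inr_injective,
          Nat.card_eq_fintype_card, card_neighborSet_eq_degree]
    _ < Fintype.card W := H.degree_lt_card_verts w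

namespace Gt

lemma exists_extend {t : ℕ} {s : Set (ℤ × Fin t)} (hs : s.Finite)
    (φ : (Gt t).induce s ↪g Gt t) : ∃ g : Gt t ≃g Gt t, ∀ x : s, g x = φ x := by
  have hcol : ∀ x y : s, (φ x).1 = (φ y).1 ↔ x.val.1 = y.val.1 := fun x y =>
    not_iff_not.mp φ.map_adj_iff
  have := hs.to_subtype
  obtain ⟨σ, hσ⟩ : ∃ σ : Equiv.Perm ℤ, ∀ x : s, σ x.val.1 = (φ x).1 := by
    let col : s → ℤ := fun x => x.val.1
    let σ₀ : Set.range col ↪ ℤ :=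
      ⟨fun a => (φ (Set.rangeSplitting col a)).1, fun a b hab => Subtype.ext <| by
        rw [← Set.apply_rangeSplitting col a, ← Set.apply_rangeSplitting col b]
        exact (hcol _ _).mp hab⟩
    obtain ⟨σ, hσ⟩ := (Set.finite_range col).exists_perm_extend σ₀
    exact ⟨σ, fun x => (hσ ⟨col x, x, rfl⟩).trans
      ((hcol _ _).mpr (Set.apply_rangeSplitting col _))⟩
  have hτ (a : ℤ) : ∃ τ : Equiv.Perm (Fin t), ∀ j (h : (a, j) ∈ s), τ j = (φ ⟨(a, j), h⟩).2 := by
    let τ₀ : {j | (a, j) ∈ s} ↪ Fin t :=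
      ⟨fun j => (φ ⟨(a, j.val), j.2⟩).2, fun j k hjk => by
        have := φ.injective (Prod.ext ((hcol ⟨(a, j.val), j.2⟩ ⟨(a, k.val), k.2⟩).mpr rfl) hjk)
        exact Subtype.ext (by simpa using this)⟩
    obtain ⟨τ, hτ⟩ := (Set.toFinite _).exists_perm_extend τ₀
    exact ⟨τ, fun j h => hτ ⟨j, h⟩⟩
  choose τ hτ using hτ
  refine ⟨⟨Equiv.prodShear σ τ, σ.injective.ne_iff⟩, ?_⟩
  rintro ⟨⟨a, j⟩, h⟩
  exact Prod.ext (hσ ⟨(a, j), h⟩) (hτ a j h)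

lemma isHomogeneous (t : ℕ) : IsHomogeneous (Gt t) :=
  fun _ _ s' hs _ _ _ f => exists_extend hs (f.toEmbedding.trans (Embedding.induce s'))

variable {t : ℕ} {W : Type*} [Fintype W]

lemma ncard_le_card_neighborSet_induce_sum (H : SimpleGraph W) {s : Set ((ℤ × Fin t) ⊕ W)} (hs : s.Finite)
    (x : s) {p : ℤ × Fin t} (hx : x.val = Sum.inl p) :
    s.ncard ≤ Nat.card (((Gt t ⊕g H).induce s).neighborSet x) + (t + Fintype.card W) := by
  set N := Subtype.val '' ((Gt t ⊕g H).induce s).neighborSet x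
  set column := Set.range fun j : Fin t => (Sum.inl (p.1, j) : (ℤ × Fin t) ⊕ W)
  have hsub : s ⊆ N ∪ (column ∪ Set.range Sum.inr) := by
    rintro (q | w) hy
    · by_cases hq : q.1 = p.1
      · exact Or.inr (Or.inl ⟨q.2, by rw [← hq]⟩)
      · refine Or.inl ⟨⟨_, hy⟩, ?_, rfl⟩
        change (Gt t ⊕g H).Adj x.val (Sum.inl q)
        rw [hx]
        exact Ne.symm hq
    · exact Or.inr (Or.inr ⟨w, rfl⟩)
  have hN : N.Finite := hs.subset (Subtype.coe_image_subset _ _)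
  calc s.ncard ≤ (N ∪ (column ∪ Set.range Sum.inr)).ncard :=
        Set.ncard_le_ncard hsub (hN.union ((Set.finite_range _).union (Set.finite_range _)))
    _ ≤ N.ncard + (column.ncard + (Set.range Sum.inr).ncard) :=
        (Set.ncard_union_le _ _).trans (Nat.add_le_add_left (Set.ncard_union_le _ _) _)
    _ = Nat.card (((Gt t ⊕g H).induce s).neighborSet x) + (t + Fintype.card W) := by
        rw [Set.ncard_image_of_injective _ Subtype.val_injective,
          Set.ncard_range_of_injective (fun i j h => by simpa using h),
          Set.ncard_range_of_injective Sum.inr_injective]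
        simp

lemma iso_induce_sum_mem_range_inl_iff {H : SimpleGraph W} {s s' : Set ((ℤ × Fin t) ⊕ W)} (hs : s.Finite)
    (hn : 2 * Fintype.card W + t ≤ s.ncard)
    (f : (Gt t ⊕g H).induce s ≃g (Gt t ⊕g H).induce s') (x : s) :
    (f x).val ∈ Set.range Sum.inl ↔ x.val ∈ Set.range Sum.inl := by
  have := hs.to_subtype
  have := Finite.of_equiv s f.toEquiv
  have hs' : s'.ncard = s.ncard := Nat.card_congr f.toEquiv.symm
  have hdeg := Nat.card_congr (f.mapNeighborSet x)
  rcases hx : x.val with p | w <;> rcases hfx : (f x).val with q | v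
  · simp
  · have := ncard_le_card_neighborSet_induce_sum H hs x hx
    have := card_neighborSet_induce_sum_lt_of_eq_inr (Gt t) H (f x) hfx
    omega
  · have := card_neighborSet_induce_sum_lt_of_eq_inr (Gt t) H x hx
    have := ncard_le_card_neighborSet_induce_sum H (Set.toFinite s') (f x) hfx
    omega
  · simp

end Gt

theorem stmt5_general (t : ℕ) {W : Type} [Fintype W] (H : SimpleGraph W)
    (hH : IsHomogeneous H) :
    GeqHom (Gt t ⊕g H) (3 * max (Fintype.card W) t) := by
  intro n hn s s' hs _ hsn _ f
  refine (Gt.isHomogeneous t).exists_sum_extend hH hs f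
    (Gt.iso_induce_sum_mem_range_inl_iff hs ?_ f)
  omega

theorem stmt5 (t : ℕ) (ht : 1 ≤ t) {W : Type} [Fintype W] (H : SimpleGraph W)
    (hH : IsHomogeneous H) :
    GeqHom (Gt t ⊕g H) (3 * max (Fintype.card W) t) :=
  stmt5_general t H hH
end

section
/- Let M be a countably infinite graph that is ≥k-homogeneous, 1-homogeneous but not 2-homogeneous, with K_∞ ⊆ M, and 2-orbits q_1, q_2, p_1, p_2 as defined. If (a,b) ∈ q_2 and (a,c) ∈ q_2 with b ≠ c, then (b,c) ∈ p_2. -/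
/-!
Two vertices with the same adjacencies to a set `Z` of at least `k` vertices are swapped by an
automorphism fixing `Z`, so they lie in a common `K_∞` with a given vertex of `Z` or both do not.
If `(u, v) ∈ q₂`, then `v` has only finitely many neighbours in a `K_∞` through `u`, and by the
swapping argument so has every other vertex of that `K_∞`. Padding with `k` such vertices shows
that a neighbour `x` of `v` with finitely many neighbours in `K_∞(u)` shares a `K_∞` with `v`.

Now let `(a, b), (a, c) ∈ q₂`. If `b ∼ c`, this puts `b` and `c` in a common `K_∞` `W`, and moving
`c` inside `W` while fixing `b` produces infinitely many `q₂`-neighbours of `b`. With `k` of them as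
padding, either (if they are adjacent to `a`) an automorphism fixing `c` sends `b` to `a`, or (if
not) one fixing `b` sends a vertex of `W` to `a`; either way a pair in `q₁` is sent into `q₂`.
If `b ≁ c` and `(b, c) ∈ p₁`, then `c` has finitely many neighbours in `K_∞(b)`, so `a` and `c`
share a `K_∞`, contradicting `(a, c) ∈ q₂`.
-/

open SimpleGraph

namespace SimpleGraph

variable {V : Type} {M : SimpleGraph V}

lemma isClique_range_of_top_embedding (f : (⊤ : SimpleGraph ℕ) ↪g M) :
    M.IsClique (Set.range f) := by
  rintro _ ⟨m, rfl⟩ _ ⟨n, rfl⟩ hne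
  exact f.map_adj_iff.mpr fun h => hne (congrArg f h)

lemma infinite_range_of_top_embedding (f : (⊤ : SimpleGraph ℕ) ↪g M) :
    (Set.range f).Infinite :=
  Set.infinite_range_of_injective f.injective

lemma exists_top_embedding_range_eq [Countable V] {C : Set V} (hC : M.IsClique C)
    (hinf : C.Infinite) : ∃ f : (⊤ : SimpleGraph ℕ) ↪g M, Set.range f = C := by
  have : Infinite C := hinf.to_subtype
  obtain ⟨_⟩ := nonempty_denumerable C
  let e : ℕ ≃ C := (Denumerable.eqv C).symm
  refine ⟨⟨(e.toEmbedding.trans (Function.Embedding.subtype _)), fun {m n} => ?_⟩, ?_⟩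
  · simp only [Function.Embedding.trans_apply, Equiv.coe_toEmbedding,
      Function.Embedding.subtype_apply, top_adj]
    exact ⟨fun h hmn => h.ne (by rw [hmn]),
      fun hmn => hC (e m).2 (e n).2 fun h => hmn (e.injective (Subtype.ext h))⟩
  · ext v
    exact ⟨by rintro ⟨n, rfl⟩; exact (e n).2, fun hv => ⟨e.symm ⟨v, hv⟩, by simp⟩⟩

end SimpleGraph

section

variable {V : Type} {M : SimpleGraph V}

lemma exists_iso_apply_eq_of_forall_adj_iff {Z : Finset V} (hM : IsNHom M (Z.card + 1))
    {x y : V} (hx : x ∉ Z) (hy : y ∉ Z) (hadj : ∀ z ∈ Z, M.Adj x z ↔ M.Adj y z) :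
    ∃ g : M ≃g M, g x = y ∧ ∀ z ∈ Z, g z = z := by
  classical
  set σ := Equiv.swap x y
  have hσZ : ∀ z ∈ Z, σ z = z := fun z hz =>
    Equiv.swap_apply_of_ne_of_ne (ne_of_mem_of_not_mem hz hx) (ne_of_mem_of_not_mem hz hy)
  have hmem : ∀ v, v ∈ (↑(insert x Z) : Set V) ↔ σ v ∈ (↑(insert y Z) : Set V) := by
    intro v
    simp only [Finset.coe_insert, Set.mem_insert_iff, Finset.mem_coe]
    by_cases hvx : v = x
    · simp [σ, hvx]
    by_cases hvy : v = y
    · subst hvy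
      simp [σ, hx, hy, hvx, Ne.symm hvx]
    · simp [σ, Equiv.swap_apply_of_ne_of_ne hvx hvy, hvx, hvy]
  have hσadj : ∀ u ∈ insert x Z, ∀ v ∈ insert x Z, M.Adj (σ u) (σ v) ↔ M.Adj u v := by
    have key : ∀ u ∈ insert x Z, ∀ v ∈ Z, M.Adj (σ u) (σ v) ↔ M.Adj u v := by
      intro u hu v hv
      rw [hσZ v hv]
      rcases Finset.mem_insert.mp hu with rfl | hu
      · rw [Equiv.swap_apply_left, hadj v hv]
      · rw [hσZ u hu]
    intro u hu v hv
    rcases Finset.mem_insert.mp hv with rfl | hv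
    · rcases Finset.mem_insert.mp hu with rfl | hu
      · simp
      · rw [M.adj_comm, key _ (Finset.mem_insert_self _ _) _ hu, M.adj_comm]
    · exact key u hu v hv
  let f : M.induce ↑(insert x Z) ≃g M.induce ↑(insert y Z) :=
    ⟨σ.subtypeEquiv hmem, fun {u v} => hσadj u u.2 v v.2⟩
  obtain ⟨g, hg⟩ := hM _ _ (Finset.finite_toSet _) (Finset.finite_toSet _)
    (by rw [Set.ncard_coe_finset, Finset.card_insert_of_notMem hx])
    (by rw [Set.ncard_coe_finset, Finset.card_insert_of_notMem hy]) f
  refine ⟨g, ?_, fun z hz => ?_⟩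
  · exact (hg ⟨x, Finset.mem_insert_self x Z⟩).trans (Equiv.swap_apply_left x y)
  · exact (hg ⟨z, Finset.mem_insert_of_mem hz⟩).trans (hσZ z hz)

lemma InCommonKInf.symm {u v : V} (h : InCommonKInf M u v) : InCommonKInf M v u :=
  let ⟨f, hu, hv⟩ := h
  ⟨f, hv, hu⟩

lemma InCommonKInf.map (g : M ≃g M) {u v : V} (h : InCommonKInf M u v) :
    InCommonKInf M (g u) (g v) := by
  obtain ⟨f, ⟨m, rfl⟩, ⟨n, rfl⟩⟩ := h
  exact ⟨g.toEmbedding.comp f, ⟨m, rfl⟩, ⟨n, rfl⟩⟩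

lemma InCommonKInf.adj {u v : V} (h : InCommonKInf M u v) (hne : u ≠ v) : M.Adj u v :=
  let ⟨f, hu, hv⟩ := h
  isClique_range_of_top_embedding f hu hv hne

lemma Q2Rel.symm {u v : V} (h : Q2Rel M u v) : Q2Rel M v u :=
  ⟨h.1.symm, fun hc => h.2 hc.symm⟩

lemma Q2Rel.map (g : M ≃g M) {u v : V} (h : Q2Rel M u v) : Q2Rel M (g u) (g v) :=
  ⟨g.map_adj_iff.mpr h.1, fun hc => h.2 (by simpa using hc.map g.symm)⟩

lemma exists_top_embedding_mem_range (hK : HasKInf M) (h1 : IsNHom M 1) (v : V) :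
    ∃ f : (⊤ : SimpleGraph ℕ) ↪g M, v ∈ Set.range f := by
  obtain ⟨f⟩ := hK
  obtain ⟨g, hg, -⟩ := exists_iso_apply_eq_of_forall_adj_iff (Z := ∅) h1
    (Finset.notMem_empty (f 0)) (Finset.notMem_empty v) (by simp)
  exact ⟨g.toEmbedding.comp f, 0, hg⟩

lemma infinite_range_diff_of_finite_inter (f : (⊤ : SimpleGraph ℕ) ↪g M) {E : Set V}
    (hE : (Set.range f ∩ E).Finite) : (Set.range f \ E).Infinite := by
  rw [← Set.sdiff_self_inter]
  exact (infinite_range_of_top_embedding f).sdiff hE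

variable {k : ℕ}

lemma InCommonKInf.of_forall_adj_iff (hM : GeqHom M k) {Z : Finset V} (hZ : k ≤ Z.card)
    {x y z : V} (hx : x ∉ Z) (hy : y ∉ Z) (hz : z ∈ Z) (hadj : ∀ t ∈ Z, M.Adj x t ↔ M.Adj y t)
    (h : InCommonKInf M z x) : InCommonKInf M z y := by
  obtain ⟨g, hgx, hgZ⟩ := exists_iso_apply_eq_of_forall_adj_iff (hM _ (by omega)) hx hy hadj
  simpa [hgx, hgZ z hz] using h.map g

lemma exists_iso_fixing_of_mem_range (hM : GeqHom M k) (f : (⊤ : SimpleGraph ℕ) ↪g M)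
    {b c d : V} (hb : b ∈ Set.range f) (hc : c ∈ Set.range f) (hd : d ∈ Set.range f) (hcb : c ≠ b)
    (hdb : d ≠ b) : ∃ g : M ≃g M, g b = b ∧ g c = d := by
  classical
  have hclique := isClique_range_of_top_embedding f
  obtain ⟨T, hTsub, hTcard⟩ :=
    (infinite_range_of_top_embedding f |>.sdiff (Set.toFinite {b, c, d})).exists_subset_card_eq k
  have hT : ∀ t ∈ T, t ∈ Set.range f ∧ t ≠ b ∧ t ≠ c ∧ t ≠ d := fun t ht => by
    simpa [not_or] using hTsub ht
  have hadj : ∀ t ∈ insert b T, M.Adj c t ↔ M.Adj d t := by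
    intro t ht
    rcases Finset.mem_insert.mp ht with rfl | ht
    · exact iff_of_true (hclique hc hb hcb) (hclique hd hb hdb)
    · obtain ⟨htf, -, htc, htd⟩ := hT t ht
      exact iff_of_true (hclique hc htf htc.symm) (hclique hd htf htd.symm)
  obtain ⟨g, hgc, hgZ⟩ := exists_iso_apply_eq_of_forall_adj_iff
    (hM _ (by have := Finset.card_le_card (Finset.subset_insert b T); omega))
    (x := c) (y := d) (by simpa [hcb] using fun h => (hT c h).2.2.1 rfl)
    (by simpa [hdb] using fun h => (hT d h).2.2.2 rfl) hadj
  exact ⟨g, hgZ b (Finset.mem_insert_self b T), hgc⟩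

lemma Q2Rel.finite_range_inter_neighborSet_of_inCommonKInf (hM : GeqHom M k) {u v y : V}
    (hq : Q2Rel M u v) (huy : InCommonKInf M u y) (hyu : y ≠ u)
    {f : (⊤ : SimpleGraph ℕ) ↪g M} (hv : v ∈ Set.range f) :
    (Set.range f ∩ M.neighborSet y).Finite := by
  classical
  by_contra hinf
  obtain ⟨T, hTsub, hTcard⟩ :=
    (Set.Infinite.sdiff hinf (Set.finite_singleton v)).exists_subset_card_eq k
  have hT : ∀ t ∈ T, t ∈ Set.range f ∧ M.Adj y t ∧ t ≠ v := fun t ht =>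
    let ⟨⟨htf, hyt⟩, htv⟩ := hTsub ht
    ⟨htf, hyt, htv⟩
  refine hq.2 (huy.of_forall_adj_iff hM (Z := insert u T) ?_ ?_ ?_ (Finset.mem_insert_self u T) ?_)
  · exact hTcard ▸ Finset.card_le_card (Finset.subset_insert u T)
  · simpa [hyu] using fun ht => (hT y ht).2.1.ne rfl
  · simpa [hq.1.ne'] using fun ht => (hT v ht).2.2 rfl
  · intro t ht
    rcases Finset.mem_insert.mp ht with rfl | ht
    · exact iff_of_true (huy.symm.adj hyu) hq.1.symm
    · obtain ⟨htf, hyt, htv⟩ := hT t ht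
      exact iff_of_true hyt (isClique_range_of_top_embedding f hv htf htv.symm)

lemma inCommonKInf_of_forall_not_adj (hM : GeqHom M k) {f : (⊤ : SimpleGraph ℕ) ↪g M}
    {z y : V} (hz : z ∈ Set.range f) (hzy : M.Adj z y) {T : Finset V} (hT : k ≤ T.card)
    (hyT : ∀ t ∈ T, t ≠ y ∧ ¬ M.Adj y t)
    (hfin : ∀ t ∈ T, (Set.range f ∩ M.neighborSet t).Finite) : InCommonKInf M z y := by
  classical
  set E : Set V := insert z (↑T ∪ ⋃ t ∈ T, M.neighborSet t)
  have hE : (Set.range f ∩ E).Finite := by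
    refine (((Set.finite_singleton z).union T.finite_toSet).union
      (T.finite_toSet.biUnion hfin)).subset ?_
    rintro w ⟨hwf, hw | hw | hw⟩
    · exact Or.inl (Or.inl hw)
    · exact Or.inl (Or.inr hw)
    · obtain ⟨t, ht, hwt⟩ := Set.mem_iUnion₂.mp hw
      exact Or.inr (Set.mem_biUnion ht ⟨hwf, hwt⟩)
  -- `y'` and `y` have the same adjacencies to `insert z T`
  obtain ⟨y', hy'f, hy'E⟩ := (infinite_range_diff_of_finite_inter f hE).nonempty
  simp only [E, Set.mem_insert_iff, Set.mem_union, Finset.mem_coe, Set.mem_iUnion,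
    mem_neighborSet, not_or, not_exists] at hy'E
  obtain ⟨hy'z, hy'T, hy'adj⟩ := hy'E
  refine InCommonKInf.of_forall_adj_iff hM (Z := insert z T) (x := y')
    (hT.trans (Finset.card_le_card (Finset.subset_insert z T))) ?_ ?_
    (Finset.mem_insert_self z T) ?_ ⟨f, hz, hy'f⟩
  · simpa [hy'z] using hy'T
  · simpa [hzy.ne'] using fun hyT' => (hyT y hyT').1 rfl
  · intro t ht
    rcases Finset.mem_insert.mp ht with rfl | ht
    · exact iff_of_true (isClique_range_of_top_embedding f hy'f hz hy'z) hzy.symm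
    · exact iff_of_false (fun h => hy'adj t ht h.symm) (hyT t ht).2


variable [Countable V]

lemma inCommonKInf_of_isClique {C : Set V} (hC : M.IsClique C)
    (hinf : C.Infinite) {u v : V} (hu : u ∈ C) (hv : v ∈ C) : InCommonKInf M u v := by
  obtain ⟨f, hf⟩ := exists_top_embedding_range_eq hC hinf
  exact ⟨f, hf ▸ hu, hf ▸ hv⟩

lemma Q2Rel.finite_range_inter_neighborSet {u v : V} (hq : Q2Rel M u v)
    {f : (⊤ : SimpleGraph ℕ) ↪g M} (hu : u ∈ Set.range f) :
    (Set.range f ∩ M.neighborSet v).Finite := by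
  by_contra hinf
  have hC : M.IsClique (insert v (Set.range f ∩ M.neighborSet v)) :=
    isClique_insert.mpr ⟨(isClique_range_of_top_embedding f).subset
      Set.inter_subset_left, fun w hw _ => hw.2⟩
  exact hq.2 (inCommonKInf_of_isClique hC (Set.Infinite.mono (Set.subset_insert _ _) hinf)
    (Set.mem_insert_of_mem _ ⟨hu, hq.1.symm⟩) (Set.mem_insert v _))


lemma Q2Rel.inCommonKInf_of_finite_range_inter_neighborSet (hM : GeqHom M k) {u v x : V}
    (hq : Q2Rel M u v) {f f' : (⊤ : SimpleGraph ℕ) ↪g M} (hu : u ∈ Set.range f)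
    (hv : v ∈ Set.range f') (hvx : M.Adj v x) (hx : (Set.range f ∩ M.neighborSet x).Finite) :
    InCommonKInf M v x := by
  set E : Set V := insert x (M.neighborSet v ∪ M.neighborSet x)
  have hE : (Set.range f ∩ E).Finite := by
    refine ((Set.finite_singleton x).union
      ((hq.finite_range_inter_neighborSet hu).union hx)).subset ?_
    rintro w ⟨hwf, hw | hw | hw⟩
    · exact Or.inl hw
    · exact Or.inr (Or.inl ⟨hwf, hw⟩)
    · exact Or.inr (Or.inr ⟨hwf, hw⟩)
  obtain ⟨T, hTsub, hTcard⟩ := (infinite_range_diff_of_finite_inter f hE).exists_subset_card_eq k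
  have hT : ∀ t ∈ T, t ∈ Set.range f ∧ t ≠ x ∧ ¬ M.Adj v t ∧ ¬ M.Adj x t := fun t ht => by
    simpa [E, not_or] using hTsub ht
  refine inCommonKInf_of_forall_not_adj hM hv hvx hTcard.ge
    (fun t ht => ⟨(hT t ht).2.1, (hT t ht).2.2.2⟩) fun t ht => ?_
  obtain ⟨htf, -, hvt, -⟩ := hT t ht
  exact hq.finite_range_inter_neighborSet_of_inCommonKInf hM ⟨f, hu, htf⟩
    (fun h => hvt (h ▸ hq.1.symm)) hv

lemma infinite_setOf_q2Rel (hM : GeqHom M k) {a b c : V} (hab : Q2Rel M a b)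
    (hac : Q2Rel M a c) {f : (⊤ : SimpleGraph ℕ) ↪g M} (hb : b ∈ Set.range f)
    (hc : c ∈ Set.range f) (hbc : b ≠ c) : {x | Q2Rel M b x}.Infinite := by
  intro hfin
  -- an automorphism fixing `b` with `c ↦ d` sends `a` to a `q₂`-neighbour of `b` adjacent to `d`
  have hcover :
      Set.range f ⊆ insert b (⋃ x ∈ {x | Q2Rel M b x}, Set.range f ∩ M.neighborSet x) := by
    intro d hd
    by_cases hdb : d = b
    · exact Or.inl hdb
    obtain ⟨g, hgb, hgc⟩ := exists_iso_fixing_of_mem_range hM f hb hc hd hbc.symm hdb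
    refine Or.inr (Set.mem_biUnion (x := g a) ?_ ⟨hd, ?_⟩)
    · simpa [hgb] using (hab.map g).symm
    · simpa [hgc] using (hac.map g).1
  exact infinite_range_of_top_embedding f
    (((hfin.biUnion fun x hx => Q2Rel.finite_range_inter_neighborSet hx hb).insert b).subset hcover)

lemma not_inCommonKInf_of_q2Rel_of_q2Rel (hM : GeqHom M k) {a b c : V} (hab : Q2Rel M a b)
    (hac : Q2Rel M a c) (hbc : b ≠ c) : ¬ InCommonKInf M b c := by
  classical
  rintro ⟨f, hb, hc⟩
  set X := {x | Q2Rel M b x} \ {a, c}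
  have hX : (X ∩ M.neighborSet a ∪ X \ M.neighborSet a).Infinite := by
    rw [Set.inter_union_sdiff]
    exact (infinite_setOf_q2Rel hM hab hac hb hc hbc).sdiff (Set.toFinite _)
  rcases Set.infinite_union.mp hX with hXa | hXa
  · obtain ⟨T, hTsub, hTcard⟩ := hXa.exists_subset_card_eq k
    have hT : ∀ t ∈ T, Q2Rel M b t ∧ t ≠ a ∧ t ≠ c ∧ M.Adj a t := fun t ht => by
      simpa [X, not_or, and_assoc] using hTsub ht
    refine hac.2 (InCommonKInf.symm ?_)
    refine InCommonKInf.of_forall_adj_iff hM (Z := insert c T) (x := b)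
      (hTcard.ge.trans (Finset.card_le_card (Finset.subset_insert c T))) ?_ ?_
      (Finset.mem_insert_self c T) ?_ ⟨f, hc, hb⟩
    · simpa [hbc] using fun h => (hT b h).1.1.ne rfl
    · simpa [hac.1.ne] using fun h => (hT a h).2.1 rfl
    · intro t ht
      rcases Finset.mem_insert.mp ht with rfl | ht
      · exact iff_of_true (isClique_range_of_top_embedding f hb hc hbc) hac.1
      · exact iff_of_true (hT t ht).1.1 (hT t ht).2.2.2
  · obtain ⟨T, hTsub, hTcard⟩ := hXa.exists_subset_card_eq k
    have hT : ∀ t ∈ T, Q2Rel M b t ∧ t ≠ a ∧ ¬ M.Adj a t := fun t ht => by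
      have := hTsub ht
      simp only [X, Set.mem_sdiff, Set.mem_ofPred_eq, Set.mem_insert_iff, Set.mem_singleton_iff,
        not_or, mem_neighborSet] at this
      exact ⟨this.1.1, this.1.2.1, this.2⟩
    exact hab.2 (inCommonKInf_of_forall_not_adj hM hb hab.1.symm hTcard.ge
      (fun t ht => ⟨(hT t ht).2.1, (hT t ht).2.2⟩)
      fun t ht => (hT t ht).1.finite_range_inter_neighborSet hb).symm

lemma not_adj_of_q2Rel_of_q2Rel (hM : GeqHom M k) (h1 : IsNHom M 1) (hK : HasKInf M)
    {a b c : V} (hab : Q2Rel M a b) (hac : Q2Rel M a c) (hbc : b ≠ c) : ¬ M.Adj b c := by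
  intro hadj
  obtain ⟨fa, ha⟩ := exists_top_embedding_mem_range hK h1 a
  obtain ⟨fb, hb⟩ := exists_top_embedding_mem_range hK h1 b
  exact not_inCommonKInf_of_q2Rel_of_q2Rel hM hab hac hbc
    (hab.inCommonKInf_of_finite_range_inter_neighborSet hM ha hb hadj
      (hac.finite_range_inter_neighborSet ha))

end

theorem stmt12_general {V : Type} [Countable V] (M : SimpleGraph V) (k : ℕ)
    (hM : GeqHom M k) (h1 : IsNHom M 1) (hK : HasKInf M) :
    ∀ a b c : V, b ≠ c → Q2Rel M a b → Q2Rel M a c → P2Rel M k b c := by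
  intro a b c hbc hab hac
  refine ⟨hbc, not_adj_of_q2Rel_of_q2Rel hM h1 hK hab hac hbc, fun hp1 => ?_⟩
  obtain ⟨fa, ha⟩ := exists_top_embedding_mem_range hK h1 a
  obtain ⟨fb, hb⟩ := exists_top_embedding_mem_range hK h1 b
  exact hac.2 (hab.symm.inCommonKInf_of_finite_range_inter_neighborSet hM hb ha hac.1
    (hp1.2.2 fb hb).1)

theorem stmt12 {V : Type} [Countable V] [Infinite V] (M : SimpleGraph V) (k : ℕ)
    (hM : GeqHom M k) (h1 : IsNHom M 1) (h2 : ¬ IsNHom M 2) (hK : HasKInf M) :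
    ∀ a b c : V, b ≠ c → Q2Rel M a b → Q2Rel M a c → P2Rel M k b c :=
  stmt12_general M k hM h1 hK
end
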